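/- arXiv:2007.11045 — 5 statements merged into one kernel-verified Lean document; each statement's English description precedes it below -/
import Mathlib

section
/- For all q ≥ 2, √2 · (Γ((q+1)/2)/√π)^{1/q} ≤ √(q − 1). -/
open Real Finset

-- elementary: log u ≥ 1 - 1/u for u > 0
lemma aux_log_ge (u : ℝ) (hu : 0 < u) : 1 - 1/u ≤ Real.log u := by
  have h := Real.log_le_sub_one_of_pos (x := 1/u) (by positivity)
  rw [Real.log_div one_ne_zero hu.ne'] at h
  simp at h
  rw [one_div]
  linarith

-- f(x) = (x+1/2) log x - (x-1/2) log(3/2) + log 2 ≥ 0 on [1/2,∞)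
lemma aux_f_nonneg (x : ℝ) (hx : 1/2 ≤ x) :
    0 ≤ (x + 1/2) * Real.log x - (x - 1/2) * Real.log (3/2) + Real.log 2 := by
  set f : ℝ → ℝ := fun y => (y + 1/2) * Real.log y - (y - 1/2) * Real.log (3/2) + Real.log 2
  have hmono : MonotoneOn f (Set.Ici (1/2 : ℝ)) := by
    have hder : ∀ y ∈ interior (Set.Ici (1/2 : ℝ)),
        HasDerivAt f (Real.log y + (y + 1/2) * (1/y) - Real.log (3/2)) y := by
      intro y hy
      rw [interior_Ici] at hy
      have hy0 : (0:ℝ) < y := lt_trans (by norm_num) hy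
      have h1 : HasDerivAt (fun z : ℝ => (z + 1/2) * Real.log z)
          (1 * Real.log y + (y + 1/2) * y⁻¹) y :=
        ((hasDerivAt_id y).add_const (1/2)).mul (Real.hasDerivAt_log hy0.ne')
      have h2 : HasDerivAt (fun z : ℝ => (z - 1/2) * Real.log (3/2))
          (1 * Real.log (3/2)) y :=
        ((hasDerivAt_id y).sub_const (1/2)).mul_const _
      have h3 := (h1.sub h2).add_const (Real.log 2)
      have he : 1 * Real.log y + (y + 1/2) * y⁻¹ - 1 * Real.log (3/2)
          = Real.log y + (y + 1/2) * (1/y) - Real.log (3/2) := by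
        rw [one_div]; ring
      rw [he] at h3
      exact h3
    apply monotoneOn_of_deriv_nonneg (convex_Ici _)
    · apply ContinuousOn.add (ContinuousOn.sub ?_ (by fun_prop)) continuousOn_const
      apply ContinuousOn.mul (by fun_prop)
      apply Real.continuousOn_log.mono
      intro y hy; simp at hy ⊢; intro h; rw [h] at hy; norm_num at hy
    · intro y hy
      exact (hder y hy).differentiableAt.differentiableWithinAt
    · intro y hy
      rw [(hder y hy).deriv]
      rw [interior_Ici] at hy
      have hy0 : (0:ℝ) < y := lt_trans (by norm_num) hy
      have hlx : 1 - 1/(2*y) - Real.log 2 ≤ Real.log y := by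
        have := aux_log_ge (2*y) (by linarith)
        rw [Real.log_mul two_ne_zero hy0.ne'] at this
        linarith
      have h32 : Real.log (3/2) = Real.log 3 - Real.log 2 := by
        rw [Real.log_div (by norm_num) (by norm_num)]
      have h3 : Real.log 3 < 2 := by
        have := Real.log_lt_sub_one_of_pos (x := 3) (by norm_num) (by norm_num)
        linarith
      have he : (y + 1/2) * (1/y) = 1 + 1/(2*y) := by field_simp
      rw [he, h32]
      linarith
  have := hmono (Set.self_mem_Ici) (show x ∈ Set.Ici (1/2:ℝ) from hx) hx
  have hf0 : f (1/2) = 0 := by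
    simp only [f]
    rw [show ((1:ℝ)/2 + 1/2) = 1 by norm_num, one_mul, Real.log_div one_ne_zero two_ne_zero]
    simp
  rw [hf0] at this
  exact this

-- interval case
lemma aux_interval (x : ℝ) (hx : 1/2 ≤ x) (hx2 : x ≤ 3/2) :
    Real.Gamma (x + 1) ≤ Real.sqrt π * x ^ (x + 1/2) := by
  have hx0 : (0:ℝ) < x := lt_of_lt_of_le (by norm_num) hx
  set t : ℝ := x - 1/2 with ht
  have ht0 : 0 ≤ t := by simp [ht]; linarith
  have ht1 : t ≤ 1 := by simp [ht]; linarith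
  have hG32 : Real.Gamma (3/2) = Real.sqrt π / 2 := by
    have := Real.Gamma_add_one (s := (1/2:ℝ)) (by norm_num)
    rw [show (1/2 : ℝ) + 1 = 3/2 by norm_num, Real.Gamma_one_half_eq] at this
    rw [this]; ring
  have hG52 : Real.Gamma (5/2) = 3/4 * Real.sqrt π := by
    have := Real.Gamma_add_one (s := (3/2:ℝ)) (by norm_num)
    rw [show (3/2 : ℝ) + 1 = 5/2 by norm_num, hG32] at this
    rw [this]; ring
  have hconv := Real.convexOn_log_Gamma.2 (show (3/2:ℝ) ∈ Set.Ioi 0 by norm_num)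
    (show (5/2:ℝ) ∈ Set.Ioi 0 by norm_num) (by linarith : (0:ℝ) ≤ 1 - t) ht0 (by ring)
  have hpt : (1 - t) • (3/2:ℝ) + t • (5/2:ℝ) = x + 1 := by
    simp only [smul_eq_mul]; rw [ht]; ring
  rw [hpt] at hconv
  simp only [Function.comp, smul_eq_mul, hG32, hG52] at hconv
  have hπ : (0:ℝ) < Real.sqrt π := Real.sqrt_pos.mpr Real.pi_pos
  have hl32 : Real.log (3/4 * Real.sqrt π) = Real.log (Real.sqrt π) - Real.log 2 + Real.log (3/2) := by
    rw [Real.log_mul (by norm_num) hπ.ne', show (3/4:ℝ) = (3/2)/2 by norm_num,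
      Real.log_div (by norm_num) two_ne_zero]
    ring
  have hl12 : Real.log (Real.sqrt π / 2) = Real.log (Real.sqrt π) - Real.log 2 := by
    rw [Real.log_div hπ.ne' two_ne_zero]
  rw [hl32, hl12] at hconv
  have hconv2 : Real.log (Real.Gamma (x+1)) ≤
      Real.log (Real.sqrt π) - Real.log 2 + t * Real.log (3/2) := by
    calc Real.log (Real.Gamma (x+1)) ≤ _ := hconv
    _ = Real.log (Real.sqrt π) - Real.log 2 + t * Real.log (3/2) := by ring
  have hf := aux_f_nonneg x hx
  have hfinal : Real.log (Real.Gamma (x+1)) ≤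
      Real.log (Real.sqrt π) + (x + 1/2) * Real.log x := by
    rw [ht] at hconv2
    linarith
  have hGpos : 0 < Real.Gamma (x + 1) := Real.Gamma_pos_of_pos (by linarith)
  have hrpos : (0:ℝ) < Real.sqrt π * x ^ (x + 1/2) := by positivity
  rw [← Real.log_le_log_iff hGpos hrpos]
  rw [Real.log_mul hπ.ne' (by positivity), Real.log_rpow hx0]
  exact hfinal

-- general case by induction
lemma aux_key : ∀ (n : ℕ) (x : ℝ), 1/2 ≤ x → x ≤ 3/2 + n →
    Real.Gamma (x + 1) ≤ Real.sqrt π * x ^ (x + 1/2) := by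
  intro n
  induction n with
  | zero => intro x h1 h2; exact aux_interval x h1 (by simpa using h2)
  | succ n ih =>
    intro x h1 h2
    by_cases h : x ≤ 3/2 + n
    · exact ih x h1 h
    · push_neg at h
      set y : ℝ := x - 1 with hy
      have hn0 : (0:ℝ) ≤ n := Nat.cast_nonneg n
      have hy1 : 1/2 ≤ y := by simp [hy]; linarith
      have hy2 : y ≤ 3/2 + n := by
        push_cast at h2 ⊢; simp [hy]; linarith
      have hIH := ih y hy1 hy2
      have hy0 : (0:ℝ) < y := by linarith
      have hstep : Real.Gamma (x + 1) = (y + 1) * Real.Gamma (y + 1) := by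
        have := Real.Gamma_add_one (s := y + 1) (by linarith)
        rw [show y + 1 + 1 = x + 1 by rw [hy]; ring] at this
        exact this
      rw [hstep]
      calc (y + 1) * Real.Gamma (y + 1) ≤ (y + 1) * (Real.sqrt π * y ^ (y + 1/2)) := by
            apply mul_le_mul_of_nonneg_left hIH (by linarith)
        _ ≤ (y + 1) * (Real.sqrt π * (y+1) ^ (y + 1/2)) := by
            apply mul_le_mul_of_nonneg_left _ (by linarith)
            apply mul_le_mul_of_nonneg_left _ (Real.sqrt_nonneg _)
            exact Real.rpow_le_rpow hy0.le (by linarith) (by linarith)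
        _ = Real.sqrt π * x ^ (x + 1/2) := by
            rw [show x = y + 1 by rw [hy]; ring, show y + 1 + 1/2 = (y + 1/2) + 1 by ring,
              Real.rpow_add_one (ne_of_gt (by linarith : (0:ℝ) < y + 1))]
            ring

noncomputable def pNorm {n : ℕ} (p : ℝ) (v : Fin n → ℝ) : ℝ :=
  (∑ j, |v j| ^ p) ^ (1 / p)

noncomputable def signVec (m : ℕ) (s : Fin m → Bool) : Fin m → ℝ :=
  fun i => if s i then 1 else -1

noncomputable def expRademacher (m : ℕ) (f : (Fin m → ℝ) → ℝ) : ℝ :=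
  (∑ s : Fin m → Bool, f (signVec m s)) / 2 ^ m

/-- c₂(q) ≤ c₁(q): √2 (Γ((q+1)/2)/√π)^{1/q} ≤ √(q-1) for q ≥ 2. -/
theorem khintchine_const_le_kst (q : ℝ) (hq : 2 ≤ q) :
    Real.sqrt 2 * (Real.Gamma ((q + 1) / 2) / Real.sqrt π) ^ (1 / q) ≤
      Real.sqrt (q - 1) := by
  set x : ℝ := (q - 1) / 2 with hx
  have hx1 : 1/2 ≤ x := by rw [hx]; linarith
  have hx0 : (0:ℝ) < x := by linarith
  have hq0 : (0:ℝ) < q := by linarith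
  have hπ : (0:ℝ) < Real.sqrt π := Real.sqrt_pos.mpr Real.pi_pos
  obtain hn : x ≤ 3/2 + (⌈x⌉₊ : ℝ) := by
    have := Nat.le_ceil x
    linarith
  have hG := aux_key ⌈x⌉₊ x hx1 hn
  have harg : (q + 1)/2 = x + 1 := by rw [hx]; ring
  have hdiv : Real.Gamma ((q + 1)/2) / Real.sqrt π ≤ x ^ (x + 1/2) := by
    rw [harg, div_le_iff₀ hπ]
    rw [mul_comm] at hG
    exact hG
  have hGpos : 0 < Real.Gamma ((q+1)/2) := Real.Gamma_pos_of_pos (by linarith)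
  have hmono : (Real.Gamma ((q + 1)/2) / Real.sqrt π) ^ (1/q) ≤ (x ^ (x + 1/2)) ^ (1/q) :=
    Real.rpow_le_rpow (by positivity) hdiv (by positivity)
  have heq : (x ^ (x + 1/2)) ^ (1/q) = x ^ (1/2 : ℝ) := by
    rw [← Real.rpow_mul hx0.le]
    congr 1
    rw [show x + 1/2 = q/2 by rw [hx]; ring]
    field_simp
  rw [heq] at hmono
  calc Real.sqrt 2 * (Real.Gamma ((q + 1) / 2) / Real.sqrt π) ^ (1 / q)
      ≤ Real.sqrt 2 * x ^ (1/2 : ℝ) := by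
        apply mul_le_mul_of_nonneg_left hmono (Real.sqrt_nonneg _)
    _ = Real.sqrt (2 * x) := by
        rw [← Real.sqrt_eq_rpow, ← Real.sqrt_mul (by norm_num)]
    _ = Real.sqrt (q - 1) := by
        rw [show (2:ℝ) * x = q - 1 from by rw [hx]; ring]
end

section
/- For every real x > 0, 1 < (2π)^{-1/2} · x^{1/2 − x} · e^x · Γ(x) < e^{1/(12x)}. -/
/-!
Write the middle quantity as `exp μ(x)` with `μ(x) = log Γ(x) - (x - 1/2) log x + x - log(2π)/2`.
By `Γ(x+1) = x Γ(x)` and the series of `log ((1+t)/(1-t))` at `t = 1/(2x+1)`,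
`μ(x) - μ(x+1) = ∑_{k ≥ 1} t^(2k)/(2k+1)`, which lies strictly between `0` and
`∑_{k ≥ 1} t^(2k)/3 = 1/(12x) - 1/(12(x+1))`. Euler's limit formula for `Γ` and Stirling's formula
for `n!` give `μ(x+n) → 0`, so `μ(x)` is the telescoping sum of these differences and
`0 < μ(x) < 1/(12x)`.
-/

open Real Finset

open Filter Topology
open scoped Nat

lemma hasSum_mul_log_one_add_inv_sub_one {x : ℝ} (hx : 0 < x) :
    HasSum (fun k : ℕ => (1 / (2 * x + 1)) ^ (2 * (k + 1)) / (2 * (k + 1) + 1))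
      ((x + 1 / 2) * log (1 + x⁻¹) - 1) := by
  have h : HasSum (fun k : ℕ => (1 / (2 * x + 1)) ^ (2 * k) / (2 * k + 1))
      ((x + 1 / 2) * log (1 + x⁻¹)) := by
    refine ((hasSum_log_one_add_inv hx).mul_left (x + 1 / 2)).congr_fun fun k => ?_
    rw [pow_succ]
    field_simp
  simpa using (hasSum_nat_add_iff' 1).mpr h

noncomputable def stirlingRemainder (x : ℝ) : ℝ :=
  log (Gamma x) - (x - 1 / 2) * log x + x - log (2 * π) / 2

lemma stirlingRemainder_sub_add_one {x : ℝ} (hx : 0 < x) :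
    stirlingRemainder x - stirlingRemainder (x + 1) = (x + 1 / 2) * log (1 + x⁻¹) - 1 := by
  have hlog : log (1 + x⁻¹) = log (x + 1) - log x := by
    rw [← log_div (by positivity) hx.ne']
    congr 1
    field_simp
  rw [stirlingRemainder, stirlingRemainder, Gamma_add_one hx.ne',
    log_mul hx.ne' (Gamma_pos_of_pos hx).ne', hlog]
  ring

lemma stirlingRemainder_sub_add_one_pos {x : ℝ} (hx : 0 < x) :
    0 < stirlingRemainder x - stirlingRemainder (x + 1) := by
  rw [stirlingRemainder_sub_add_one hx]
  exact hasSum_lt (f := 0) (i := 0) (fun k => by positivity) (by positivity) hasSum_zero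
    (hasSum_mul_log_one_add_inv_sub_one hx)

lemma stirlingRemainder_sub_add_one_lt {x : ℝ} (hx : 0 < x) :
    stirlingRemainder x - stirlingRemainder (x + 1) < 1 / (12 * x) - 1 / (12 * (x + 1)) := by
  obtain ⟨r, hr⟩ : ∃ r, r = (1 / (2 * x + 1)) ^ 2 := ⟨_, rfl⟩
  have hr0 : 0 < r := by rw [hr]; positivity
  have hr1 : 1 - r = 4 * x * (x + 1) / (2 * x + 1) ^ 2 := by rw [hr]; field_simp; ring
  have hgeom : HasSum (fun k : ℕ => r ^ (k + 1) / 3) (1 / (12 * x) - 1 / (12 * (x + 1))) := by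
    have hr1' : r < 1 := by
      have : 0 < 1 - r := by rw [hr1]; positivity
      linarith
    have h := ((hasSum_geometric_of_lt_one hr0.le hr1').mul_left r).div_const 3
    rw [show 1 / (12 * x) - 1 / (12 * (x + 1)) = r * (1 - r)⁻¹ / 3 by
      rw [hr1, hr]; field_simp; ring]
    exact h.congr_fun fun k => by ring
  rw [stirlingRemainder_sub_add_one hx]
  refine hasSum_lt (i := 1) (fun k => ?_) ?_ (hasSum_mul_log_one_add_inv_sub_one hx) hgeom
  · rw [pow_mul, ← hr]
    gcongr
    linarith
  · rw [pow_mul, ← hr]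
    gcongr
    norm_num

lemma tendsto_add_mul_log_add_sub_log (a c : ℝ) :
    Tendsto (fun y : ℝ => (y + c) * (log (y + a) - log y)) atTop (𝓝 a) := by
  have h := (tendsto_mul_log_one_add_div_atTop a).add ((tendsto_log_comp_add_sub_log a).const_mul c)
  rw [mul_zero, add_zero] at h
  refine h.congr' ?_
  filter_upwards [eventually_gt_atTop 0, eventually_gt_atTop (-a)] with y hy hya
  rw [← log_div (by linarith) hy.ne', add_div, div_self hy.ne', add_comm 1 (a / y)]
  ring

lemma tendsto_log_Gamma_add_nat_add_one_sub {x : ℝ} (hx : 0 < x) :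
    Tendsto (fun n : ℕ => log (Gamma (x + (n + 1))) - x * log n - log n !) atTop (𝓝 0) := by
  have hrec : ∀ {y : ℝ}, 0 < y → (log ∘ Gamma) (y + 1) = (log ∘ Gamma) y + log y := fun hy => by
    simp only [Function.comp_apply, Gamma_add_one hy.ne',
      log_mul hy.ne' (Gamma_pos_of_pos hy).ne', add_comm]
  have h := (BohrMollerup.tendsto_log_gamma hx).const_sub (log (Gamma x))
  rw [sub_self] at h
  refine h.congr fun n => ?_
  have := BohrMollerup.f_add_nat_eq hrec hx (n + 1)
  simp only [Function.comp_apply, Nat.cast_add_one] at this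
  rw [this, BohrMollerup.logGammaSeq]
  ring

lemma tendsto_log_factorial_sub_stirling :
    Tendsto (fun n : ℕ => log n ! - (n + 1 / 2) * log n + n - log (2 * π) / 2) atTop (𝓝 0) := by
  have h := ((continuousAt_log (by positivity)).tendsto.comp
    Stirling.tendsto_stirlingSeq_sqrt_pi).sub_const (log (sqrt π))
  rw [sub_self] at h
  refine h.congr' ?_
  filter_upwards [eventually_gt_atTop 0] with n hn
  have hn' : (n : ℝ) ≠ 0 := by positivity
  simp only [Function.comp_apply, Stirling.log_stirlingSeq_formula, log_sqrt pi_pos.le,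
    log_mul two_ne_zero hn', log_mul two_ne_zero pi_ne_zero, log_div hn' (exp_ne_zero 1), log_exp]
  ring

lemma tendsto_stirlingRemainder_add_nat {x : ℝ} (hx : 0 < x) :
    Tendsto (fun n : ℕ => stirlingRemainder (x + n)) atTop (𝓝 0) := by
  rw [← tendsto_add_atTop_iff_nat 1]
  -- `μ(x+n+1)` = (Euler's limit) + (Stirling for `n!`) - ((n+x+1/2) log (1 + (x+1)/n) - (x+1))
  have hlog := (tendsto_add_mul_log_add_sub_log (x + 1) (x + 1 / 2)).comp
    tendsto_natCast_atTop_atTop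
  have h := ((tendsto_log_Gamma_add_nat_add_one_sub hx).add
    tendsto_log_factorial_sub_stirling).sub (hlog.sub_const (x + 1))
  rw [add_zero, sub_self, sub_zero] at h
  refine h.congr fun n => ?_
  simp only [Function.comp_apply, stirlingRemainder, Nat.cast_add_one,
    show (n : ℝ) + (x + 1) = x + (n + 1) by ring]
  ring

lemma hasSum_sub_add_one_of_antitone {f : ℕ → ℝ} {l : ℝ} (hf : Antitone f)
    (hl : Tendsto f atTop (𝓝 l)) : HasSum (fun n => f n - f (n + 1)) (f 0 - l) := by
  rw [hasSum_iff_tendsto_nat_of_nonneg (fun n => sub_nonneg.2 (hf n.le_succ))]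
  simpa only [sum_range_sub'] using tendsto_const_nhds.sub hl

lemma hasSum_stirlingRemainder {x : ℝ} (hx : 0 < x) :
    HasSum (fun n : ℕ => stirlingRemainder (x + n) - stirlingRemainder (x + n + 1))
      (stirlingRemainder x) := by
  have hanti : Antitone fun n : ℕ => stirlingRemainder (x + n) :=
    antitone_nat_of_succ_le fun n => by
      simpa only [Nat.cast_add_one, ← add_assoc, sub_nonneg] using
        (stirlingRemainder_sub_add_one_pos (x := x + n) (by positivity)).le
  simpa only [Nat.cast_add_one, ← add_assoc, Nat.cast_zero, add_zero, sub_zero] using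
    hasSum_sub_add_one_of_antitone hanti (tendsto_stirlingRemainder_add_nat hx)

lemma stirlingRemainder_pos {x : ℝ} (hx : 0 < x) : 0 < stirlingRemainder x :=
  hasSum_lt (f := 0) (i := 0) (fun n => (stirlingRemainder_sub_add_one_pos (by positivity)).le)
    (stirlingRemainder_sub_add_one_pos (by simpa using hx)) hasSum_zero
    (hasSum_stirlingRemainder hx)

lemma stirlingRemainder_lt {x : ℝ} (hx : 0 < x) : stirlingRemainder x < 1 / (12 * x) := by
  have hanti : Antitone fun n : ℕ => 1 / (12 * (x + n)) := fun m n hmn =>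
    one_div_le_one_div_of_le (by positivity) (by gcongr)
  have hden : Tendsto (fun n : ℕ => 12 * (x + n)) atTop atTop :=
    (tendsto_atTop_add_const_left _ x tendsto_natCast_atTop_atTop).const_mul_atTop (by norm_num)
  have htel := hasSum_sub_add_one_of_antitone hanti (tendsto_const_nhds.div_atTop hden)
  simp only [Nat.cast_zero, add_zero, sub_zero, Nat.cast_add_one, ← add_assoc] at htel
  exact hasSum_lt (i := 0) (fun n => (stirlingRemainder_sub_add_one_lt (by positivity)).le)
    (stirlingRemainder_sub_add_one_lt (by simpa using hx)) (hasSum_stirlingRemainder hx) htel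

lemma exp_stirlingRemainder {x : ℝ} (hx : 0 < x) :
    exp (stirlingRemainder x) =
      (2 * π) ^ (-(1 / 2) : ℝ) * x ^ (1 / 2 - x) * exp x * Gamma x := by
  rw [rpow_def_of_pos (by positivity), rpow_def_of_pos hx, ← exp_log (Gamma_pos_of_pos hx),
    ← exp_add, ← exp_add, ← exp_add, stirlingRemainder]
  congr 1
  ring

/-- Two-sided Stirling-type bound: 1 < (2π)^{-1/2} x^{1/2-x} e^x Γ(x) < e^{1/(12x)}. -/
theorem stirling_two_sided (x : ℝ) (hx : 0 < x) :
    1 < (2 * π) ^ (-(1 / 2) : ℝ) * x ^ (1 / 2 - x) * Real.exp x * Real.Gamma x ∧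
      (2 * π) ^ (-(1 / 2) : ℝ) * x ^ (1 / 2 - x) * Real.exp x * Real.Gamma x <
        Real.exp (1 / (12 * x)) := by
  rw [← exp_stirlingRemainder hx]
  exact ⟨one_lt_exp_iff.2 (stirlingRemainder_pos hx), exp_lt_exp.2 (stirlingRemainder_lt hx)⟩
end

section
/- For every real x > 0, the digamma function satisfies ψ(x) ≤ log(x) − 1/(2x). -/
open Real

/-- The digamma function ψ = Γ'/Γ. -/
noncomputable def digamma (x : ℝ) : ℝ := deriv Real.Gamma x / Real.Gamma x

/-
Log-convexity of Γ bounds its slope at y by the secant over [y, y + 1], which by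
Γ(y + 1) = yΓ(y) gives ψ(y) ≤ log y; hence the defect D(y) = log y - 1/(2y) - ψ(y) is at least
-1/(2y). By ψ(y + 1) = ψ(y) + 1/y, the step D(y) - D(y + 1) is the error of the trapezoidal rule
for ∫_y^{y+1} dt/t, which is nonnegative because 1/t is convex. So
D(x) ≥ D(x + n) ≥ -1/(2(x + n)) for every n, and D(x) ≥ 0.
-/

open Filter Topology

lemma two_mul_log_le_sub_inv {u : ℝ} (hu : 1 ≤ u) : 2 * log u ≤ u - u⁻¹ := by
  have h := self_le_sinh_iff.2 (log_nonneg hu)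
  rw [sinh_log (by linarith)] at h
  linarith

lemma log_add_one_sub_log_le {y : ℝ} (hy : 0 < y) :
    log (y + 1) - log y ≤ (y⁻¹ + (y + 1)⁻¹) / 2 := by
  have h := two_mul_log_le_sub_inv (u := (y + 1) / y) (by rw [le_div_iff₀ hy]; linarith)
  rw [log_div (by positivity) hy.ne', inv_div] at h
  have hsum : (y + 1) / y - y / (y + 1) = y⁻¹ + (y + 1)⁻¹ := by field_simp; ring
  linarith

lemma digamma_eq_logDeriv (y : ℝ) : digamma y = logDeriv Gamma y := rfl

lemma digamma_add_one {y : ℝ} (hy : ∀ m : ℕ, y ≠ -m) :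
    digamma (y + 1) = digamma y + y⁻¹ := by
  have hy0 : y ≠ 0 := by simpa using hy 0
  have hshift : Gamma ∘ (· + 1) =ᶠ[𝓝 y] fun t => id t * Gamma t := by
    filter_upwards [isOpen_ne.mem_nhds hy0] with t ht using Gamma_add_one ht
  have hlog := logDeriv_comp (f := Gamma) (g := (· + 1)) (x := y)
    (differentiableAt_Gamma fun m h => hy (m + 1) (by push_cast; linarith)) (by fun_prop)
  rw [(logDeriv_congr_nhds hshift).eq_of_nhds, logDeriv_mul y hy0 (Gamma_ne_zero hy)
    differentiableAt_id (differentiableAt_Gamma hy), logDeriv_id, deriv_add_const, deriv_id'',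
    mul_one] at hlog
  rw [digamma_eq_logDeriv, digamma_eq_logDeriv, ← hlog, one_div, add_comm]

lemma not_neg_natCast_of_pos {y : ℝ} (hy : 0 < y) : ∀ m : ℕ, y ≠ -m :=
  fun m => (neg_nonpos.2 m.cast_nonneg |>.trans_lt hy).ne'

lemma digamma_eq_deriv_log_comp_Gamma {y : ℝ} (hy : 0 < y) :
    digamma y = deriv (log ∘ Gamma) y :=
  (deriv_log_comp_eq_logDeriv (differentiableAt_Gamma (not_neg_natCast_of_pos hy))
    (Gamma_pos_of_pos hy).ne').symm

lemma log_comp_Gamma_add_one {y : ℝ} (hy : 0 < y) :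
    (log ∘ Gamma) (y + 1) = (log ∘ Gamma) y + log y := by
  simp only [Function.comp_apply, Gamma_add_one hy.ne',
    log_mul hy.ne' (Gamma_pos_of_pos hy).ne', add_comm]

lemma digamma_le_log {y : ℝ} (hy : 0 < y) : digamma y ≤ log y := by
  have hdiff : DifferentiableAt ℝ (log ∘ Gamma) y :=
    (differentiableAt_Gamma (not_neg_natCast_of_pos hy)).log (Gamma_pos_of_pos hy).ne'
  have h := convexOn_log_Gamma.deriv_le_slope hy (Set.mem_Ioi.2 (by linarith)) (lt_add_one y) hdiff
  rwa [slope_def_field, add_sub_cancel_left, div_one, log_comp_Gamma_add_one hy,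
    add_sub_cancel_left, ← digamma_eq_deriv_log_comp_Gamma hy] at h

noncomputable def digammaDefect (y : ℝ) : ℝ := log y - 1 / (2 * y) - digamma y

lemma neg_inv_two_mul_le_digammaDefect {y : ℝ} (hy : 0 < y) :
    -(2 * y)⁻¹ ≤ digammaDefect y := by
  have := digamma_le_log hy
  rw [digammaDefect, one_div]
  linarith

lemma digammaDefect_add_one_le {y : ℝ} (hy : 0 < y) :
    digammaDefect (y + 1) ≤ digammaDefect y := by
  have htrap := log_add_one_sub_log_le hy
  rw [digammaDefect, digammaDefect, digamma_add_one (not_neg_natCast_of_pos hy)]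
  have hhalf : 1 / (2 * y) = y⁻¹ / 2 := by field_simp
  have hhalf' : 1 / (2 * (y + 1)) = (y + 1)⁻¹ / 2 := by field_simp
  linarith

lemma antitone_digammaDefect_add_nat {x : ℝ} (hx : 0 < x) :
    Antitone fun n : ℕ => digammaDefect (x + n) :=
  antitone_nat_of_succ_le fun n => by
    simpa [add_assoc] using digammaDefect_add_one_le (y := x + n) (by positivity)

/-- ψ(x) ≤ log x - 1/(2x) for x > 0. -/
theorem digamma_le (x : ℝ) (hx : 0 < x) :
    digamma x ≤ Real.log x - 1 / (2 * x) := by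
  have hlim : Tendsto (fun n : ℕ => -(2 * (x + n))⁻¹) atTop (𝓝 0) := by
    simpa using (tendsto_inv_atTop_zero.comp <| (tendsto_atTop_add_const_left _ x
      tendsto_natCast_atTop_atTop).const_mul_atTop two_pos).neg
  have hbound (n : ℕ) : -(2 * (x + n))⁻¹ ≤ digammaDefect x :=
    (neg_inv_two_mul_le_digammaDefect (by positivity)).trans
      (by simpa using antitone_digammaDefect_add_nat hx n.zero_le)
  have := le_of_tendsto' hlim hbound
  rw [digammaDefect] at this
  linarith
end

section
/- For 1 < p ≤ 2 with conjugate p* ≥ 2, and any d×m real matrix X, the inequality √2 · (Γ((p*+1)/2)/√π)^{1/p*} · ‖Xᵀ‖_{2,p*} ≤ √(p*−1) · ‖X‖_{p*,2} holds. -/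
open Real Finset

/-!
The inequality splits into a bound on the constants and a bound on the mixed norms.
With `a = (p* - 1) / 2 ≥ 1 / 2`, the constants compare through `Γ(a + 1) ≤ √π a^(a + 1/2)`,
proved on `[1/2, 3/2]` from log-convexity and monotonicity of `Γ`, and propagated to all
`a ≥ 1/2` by `Γ(a + 1) = a Γ(a)`. For the norms, raising `‖Xᵀ‖_{2,p*}` to the square turns it
into the `ℓ^{p*/2}`-norm of a sum of `m` vectors, so Minkowski's inequality in `ℓ^{p*/2}`
bounds it by `‖X‖_{p*,2}²`.
-/

section pNorm

variable {n : ℕ}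

lemma pNorm_nonneg (r : ℝ) (v : Fin n → ℝ) : 0 ≤ pNorm r v :=
  rpow_nonneg (sum_nonneg fun _ _ => rpow_nonneg (abs_nonneg _) _) _

lemma pNorm_rpow_self {r : ℝ} (hr : r ≠ 0) (v : Fin n → ℝ) :
    pNorm r v ^ r = ∑ j, |v j| ^ r := by
  rw [pNorm, ← rpow_mul (sum_nonneg fun _ _ => rpow_nonneg (abs_nonneg _) _),
    one_div_mul_cancel hr, rpow_one]

lemma pNorm_rpow {r q : ℝ} (hq : 0 < q) (v : Fin n → ℝ) :
    pNorm r v ^ q = pNorm (r / q) (fun j => |v j| ^ q) := by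
  have hpow : ∀ j, |(|v j| ^ q)| ^ (r / q) = |v j| ^ r := fun j => by
    rw [abs_of_nonneg (rpow_nonneg (abs_nonneg _) _), ← rpow_mul (abs_nonneg _),
      mul_div_cancel₀ r hq.ne']
  simp only [pNorm, hpow]
  rw [← rpow_mul (sum_nonneg fun _ _ => rpow_nonneg (abs_nonneg _) _)]
  congr 1
  field_simp

lemma pNorm_eq_norm_toLp {r : ℝ} (hr : 0 < r) (v : Fin n → ℝ) :
    pNorm r v = ‖WithLp.toLp (ENNReal.ofReal r) v‖ := by
  rw [PiLp.norm_eq_sum (by rwa [ENNReal.toReal_ofReal hr.le]), ENNReal.toReal_ofReal hr.le]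
  rfl

lemma pNorm_sum_le {ι : Type*} {r : ℝ} (hr : 1 ≤ r) (s : Finset ι) (f : ι → Fin n → ℝ) :
    pNorm r (∑ i ∈ s, f i) ≤ ∑ i ∈ s, pNorm r (f i) := by
  have : Fact (1 ≤ ENNReal.ofReal r) := ⟨by simpa using hr⟩
  simp only [pNorm_eq_norm_toLp (zero_lt_one.trans_le hr), WithLp.toLp_sum]
  exact norm_sum_le _ _

/-- Minkowski's integral inequality for counting measures. -/
theorem pNorm_pNorm_le_pNorm_pNorm {d m : ℕ} {q r : ℝ} (hq : 0 < q) (hqr : q ≤ r)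
    (A : Fin d → Fin m → ℝ) :
    pNorm r (fun j => pNorm q (A j)) ≤ pNorm q (fun i => pNorm r (fun j => A j i)) := by
  rw [← rpow_le_rpow_iff (pNorm_nonneg _ _) (pNorm_nonneg _ _) hq]
  calc pNorm r (fun j => pNorm q (A j)) ^ q
      = pNorm (r / q) (fun j => |pNorm q (A j)| ^ q) := pNorm_rpow hq _
    _ = pNorm (r / q) (∑ i, fun j => |A j i| ^ q) := by
        congr 1
        ext j
        rw [abs_of_nonneg (pNorm_nonneg _ _), pNorm_rpow_self hq.ne', Finset.sum_apply]
    _ ≤ ∑ i, pNorm (r / q) (fun j => |A j i| ^ q) := pNorm_sum_le ((one_le_div hq).2 hqr) _ _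
    _ = ∑ i, |pNorm r (fun j => A j i)| ^ q := by
        refine sum_congr rfl fun i _ => ?_
        rw [abs_of_nonneg (pNorm_nonneg _ _), pNorm_rpow hq]
    _ = pNorm q (fun i => pNorm r (fun j => A j i)) ^ q := (pNorm_rpow_self hq.ne' _).symm

end pNorm

lemma Real.Gamma_three_halves : Gamma (3 / 2) = √π / 2 := by
  rw [show (3 : ℝ) / 2 = 1 / 2 + 1 by norm_num, Gamma_add_one (by norm_num), Gamma_one_half_eq]
  ring

lemma Real.Gamma_add_one_le_sqrt_pi_mul_rpow_of_le_one {a : ℝ} (h1 : 1 / 2 ≤ a) (h2 : a ≤ 1) :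
    Gamma (a + 1) ≤ √π * a ^ (a + 1 / 2) := by
  have ha : 0 < a := by linarith
  -- `a + 1` interpolates between `3/2` and `2`, and `a` between `1/2` and `1`
  have hGamma : log (Gamma (a + 1)) ≤ (2 - 2 * a) * (log π / 2 - log 2) := by
    have h := convexOn_log_Gamma.2 (show (0 : ℝ) < 3 / 2 by norm_num) (show (0 : ℝ) < 2 by norm_num)
      (show 0 ≤ 2 - 2 * a by linarith) (show 0 ≤ 2 * a - 1 by linarith) (by ring)
    simp only [smul_eq_mul, Function.comp_apply] at h
    rwa [show (2 - 2 * a) * (3 / 2) + (2 * a - 1) * 2 = a + 1 by ring, Gamma_two, log_one,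
      Gamma_three_halves, log_div (by positivity) two_ne_zero, log_sqrt pi_nonneg,
      mul_zero, add_zero] at h
  have hlog : (2 * a - 2) * log 2 ≤ log a := by
    have h := strictConcaveOn_log_Ioi.concaveOn.2 (show (0 : ℝ) < 1 / 2 by norm_num)
      (show (0 : ℝ) < 1 by norm_num) (show 0 ≤ 2 - 2 * a by linarith)
      (show 0 ≤ 2 * a - 1 by linarith) (by ring)
    simp only [smul_eq_mul] at h
    rw [show (2 - 2 * a) * (1 / 2) + (2 * a - 1) * 1 = a by ring,
      log_one, one_div, log_inv] at h
    linarith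
  have hπ : log 2 ≤ log π := log_le_log two_pos (by linarith [pi_gt_three])
  rw [← log_le_log_iff (Gamma_pos_of_pos (by linarith)) (by positivity),
    log_mul (by positivity) (by positivity), log_rpow ha, log_sqrt pi_nonneg]
  nlinarith [mul_le_mul_of_nonneg_left hlog (show 0 ≤ a + 1 / 2 by linarith),
    mul_nonneg (show 0 ≤ 2 * a - 1 by linarith) (sub_nonneg.2 hπ),
    mul_nonneg (mul_nonneg (show 0 ≤ 2 * a - 1 by linarith) (show 0 ≤ 2 * a - 1 by linarith))
      (log_nonneg one_le_two)]

lemma Real.Gamma_add_one_le_sqrt_pi_mul_rpow_of_one_le {a : ℝ} (h1 : 1 ≤ a) (h2 : a ≤ 3 / 2) :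
    Gamma (a + 1) ≤ √π * a ^ (a + 1 / 2) :=
  calc Gamma (a + 1)
      ≤ Gamma (3 / 2 + 1) :=
        Gamma_strictMonoOn_Ici.monotoneOn (by simp; linarith) (by norm_num) (by linarith)
    _ = 3 / 4 * √π := by rw [Gamma_add_one (by norm_num), Gamma_three_halves]; ring
    _ ≤ √π * 1 := by linarith [sqrt_nonneg π]
    _ ≤ √π * a ^ (a + 1 / 2) := by gcongr; exact one_le_rpow h1 (by linarith)

lemma Real.Gamma_add_two_le_sqrt_pi_mul_rpow {a : ℝ} (ha : 0 ≤ a)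
    (h : Gamma (a + 1) ≤ √π * a ^ (a + 1 / 2)) :
    Gamma (a + 1 + 1) ≤ √π * (a + 1) ^ (a + 1 + 1 / 2) := by
  have ha1 : 0 < a + 1 := by linarith
  calc Gamma (a + 1 + 1)
      = (a + 1) * Gamma (a + 1) := Gamma_add_one ha1.ne'
    _ ≤ (a + 1) * (√π * a ^ (a + 1 / 2)) := by gcongr
    _ ≤ (a + 1) * (√π * (a + 1) ^ (a + 1 / 2)) := by gcongr; linarith
    _ = √π * (a + 1) ^ (a + 1 + 1 / 2) := by
        rw [show a + 1 + 1 / 2 = a + 1 / 2 + 1 by ring, rpow_add_one ha1.ne']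
        ring

theorem Real.Gamma_add_one_le_sqrt_pi_mul_rpow {a : ℝ} (ha : 1 / 2 ≤ a) :
    Gamma (a + 1) ≤ √π * a ^ (a + 1 / 2) := by
  suffices ∀ n : ℕ, ∀ a : ℝ, 1 / 2 ≤ a → a ≤ n + 3 / 2 → Gamma (a + 1) ≤ √π * a ^ (a + 1 / 2) from
    this ⌈a⌉₊ a ha (by linarith [Nat.le_ceil a])
  intro n
  induction n with
  | zero =>
    intro a h1 h2
    rcases le_total a 1 with h | h
    · exact Gamma_add_one_le_sqrt_pi_mul_rpow_of_le_one h1 h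
    · exact Gamma_add_one_le_sqrt_pi_mul_rpow_of_one_le h (by simpa using h2)
  | succ n ih =>
    intro a h1 h2
    rcases le_total a (n + 3 / 2) with h | h
    · exact ih a h1 h
    · have := Gamma_add_two_le_sqrt_pi_mul_rpow (by linarith)
        (ih (a - 1) (by linarith) (by push_cast at h2; linarith))
      rwa [sub_add_cancel] at this

lemma sqrt_two_mul_Gamma_div_sqrt_pi_rpow_le {r : ℝ} (hr : 2 ≤ r) :
    √2 * (Gamma ((r + 1) / 2) / √π) ^ (1 / r) ≤ √(r - 1) := by
  have hGamma : Gamma ((r + 1) / 2) / √π ≤ ((r - 1) / 2) ^ (r / 2) := by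
    have h := Gamma_add_one_le_sqrt_pi_mul_rpow (a := (r - 1) / 2) (by linarith)
    rw [show (r - 1) / 2 + 1 = (r + 1) / 2 by ring, show (r - 1) / 2 + 1 / 2 = r / 2 by ring] at h
    rwa [div_le_iff₀ (sqrt_pos.2 pi_pos), mul_comm]
  have hroot : (((r - 1) / 2) ^ (r / 2)) ^ (1 / r) = √((r - 1) / 2) := by
    rw [← rpow_mul (by linarith), sqrt_eq_rpow]
    congr 1
    field_simp
  calc √2 * (Gamma ((r + 1) / 2) / √π) ^ (1 / r)
      ≤ √2 * (((r - 1) / 2) ^ (r / 2)) ^ (1 / r) := by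
        gcongr
    _ = √(r - 1) := by
        rw [hroot, ← sqrt_mul zero_le_two, mul_div_cancel₀ _ two_ne_zero]

/-- The new bound is tighter:
√2 (Γ((p*+1)/2)/√π)^{1/p*} ‖Xᵀ‖_{2,p*} ≤ √(p*-1) ‖X‖_{p*,2} for 1 < p ≤ 2. -/
theorem new_bound_tighter {d m : ℕ} (X : Matrix (Fin d) (Fin m) ℝ)
    (p ps : ℝ) (hp : 1 < p) (hp2 : p ≤ 2) (hconj : 1 / p + 1 / ps = 1) :
    Real.sqrt 2 * (Real.Gamma ((ps + 1) / 2) / Real.sqrt π) ^ (1 / ps) *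
        pNorm ps (fun j : Fin d => pNorm 2 (fun i : Fin m => X j i)) ≤
      Real.sqrt (ps - 1) *
        pNorm 2 (fun i : Fin m => pNorm ps (fun j : Fin d => X j i)) := by
  have hps : 2 ≤ ps := by
    have hinv_pos : 0 < 1 / ps := by
      have : 1 / p < 1 := (div_lt_one (by linarith)).2 hp
      linarith
    have hinv_le : 1 / ps ≤ 1 / 2 := by
      have : 1 / 2 ≤ 1 / p := one_div_le_one_div_of_le (by linarith) hp2
      linarith
    rwa [one_div_le_one_div (one_div_pos.1 hinv_pos) two_pos] at hinv_le
  exact mul_le_mul (sqrt_two_mul_Gamma_div_sqrt_pi_rpow_le hps)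
    (pNorm_pNorm_le_pNorm_pNorm two_pos hps X) (pNorm_nonneg _ _) (sqrt_nonneg _)
end

section
/- Let m ≥ 1, d = 2^m, and let x₁,…,x_m ∈ ℝ^d be chosen so that the rows of the d×m matrix Xᵀ enumerate all sign vectors in {−1,+1}^m. Then for W > 0, the empirical Rademacher complexity E_σ[ sup_{‖w‖₁ ≤ W} (1/m) Σᵢ σᵢ (w·xᵢ) ] equals W, which equals (W/m)·√(log₂ d)·‖Xᵀ‖_{2,∞}. -/
open Real Finset

lemma pNorm_one_eq {n : ℕ} (v : Fin n → ℝ) : pNorm 1 v = ∑ j, |v j| := by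
  simp [pNorm]

/-- Tightness of the √(log d) factor for p = 1: when d = 2^m and the rows of Xᵀ
enumerate all sign vectors in {-1,+1}^m, the empirical Rademacher complexity of F₁
equals W = (W/m) √(log₂ d) ‖Xᵀ‖_{2,∞}. -/
theorem rademacher_p_one_log_d_tight (m : ℕ) (hm : 0 < m)
    (x : Fin m → Fin (2 ^ m) → ℝ)
    (hsign : ∀ j : Fin (2 ^ m), ∀ i : Fin m, x i j = 1 ∨ x i j = -1)
    (hall : ∀ s : Fin m → Bool, ∃ j : Fin (2 ^ m),
      ∀ i : Fin m, x i j = (if s i then (1 : ℝ) else -1))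
    (W : ℝ) (hW : 0 < W) :
    expRademacher m (fun σ =>
        sSup {t : ℝ | ∃ w : Fin (2 ^ m) → ℝ, pNorm 1 w ≤ W ∧
          t = (1 / (m : ℝ)) * ∑ i, σ i * ∑ j, w j * x i j}) = W ∧
      W = (W / m) * Real.sqrt (Real.logb 2 ((2 : ℝ) ^ m)) *
        (⨆ j : Fin (2 ^ m), pNorm 2 (fun i : Fin m => x i j)) := by
  have hm' : (0 : ℝ) < m := by exact_mod_cast hm
  constructor
  · -- empirical Rademacher complexity equals W
    have key : ∀ σ : Fin m → ℝ, (∀ i, σ i = 1 ∨ σ i = -1) →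
        sSup {t : ℝ | ∃ w : Fin (2 ^ m) → ℝ, pNorm 1 w ≤ W ∧
          t = (1 / (m : ℝ)) * ∑ i, σ i * ∑ j, w j * x i j} = W := by
      intro σ hσ
      set S := {t : ℝ | ∃ w : Fin (2 ^ m) → ℝ, pNorm 1 w ≤ W ∧
          t = (1 / (m : ℝ)) * ∑ i, σ i * ∑ j, w j * x i j} with hS
      obtain ⟨j₀, hj₀⟩ := hall (fun i => decide (σ i = 1))
      have hj₀' : ∀ i, x i j₀ = σ i := by
        intro i
        rcases hσ i with h | h <;>
          simp [hj₀ i, h, show ((-1:ℝ)) ≠ 1 by norm_num]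
      -- W is a member
      have hmem : W ∈ S := by
        refine ⟨fun j => if j = j₀ then W else 0, ?_, ?_⟩
        · rw [pNorm_one_eq]
          have : ∑ j, |(if j = j₀ then W else 0 : ℝ)| = W := by
            rw [Finset.sum_eq_single j₀]
            · simp [abs_of_pos hW]
            · intro b _ hb; simp [hb]
            · simp
          rw [this]
        · have : ∀ i, σ i * ∑ j, (if j = j₀ then W else 0) * x i j = W := by
            intro i
            rw [Finset.sum_eq_single j₀]
            · rcases hσ i with h | h <;> simp [hj₀' i, h]
            · intro b _ hb; simp [hb]
            · simp
          rw [Finset.sum_congr rfl (fun i _ => this i)]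
          simp [Finset.card_univ]
          field_simp
      -- W is an upper bound
      have hub : ∀ t ∈ S, t ≤ W := by
        rintro t ⟨w, hw, rfl⟩
        have hswap : ∑ i, σ i * ∑ j, w j * x i j
            = ∑ j, w j * ∑ i, σ i * x i j := by
          simp_rw [Finset.mul_sum]
          rw [Finset.sum_comm]
          exact Finset.sum_congr rfl fun j _ => Finset.sum_congr rfl fun i _ => by ring
        have hbound : ∀ j, |w j * ∑ i, σ i * x i j| ≤ |w j| * m := by
          intro j
          rw [abs_mul]
          refine mul_le_mul_of_nonneg_left ?_ (abs_nonneg _)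
          calc |∑ i, σ i * x i j| ≤ ∑ i, |σ i * x i j| := Finset.abs_sum_le_sum_abs _ _
            _ ≤ ∑ _i : Fin m, (1 : ℝ) := by
                refine Finset.sum_le_sum fun i _ => ?_
                rw [abs_mul]
                rcases hσ i with h | h <;> rcases hsign j i with h' | h' <;>
                  simp [h, h']
            _ = m := by simp
        have : ∑ i, σ i * ∑ j, w j * x i j ≤ (∑ j, |w j|) * m := by
          rw [hswap]
          calc ∑ j, w j * ∑ i, σ i * x i j
              ≤ ∑ j, |w j * ∑ i, σ i * x i j| :=
                Finset.sum_le_sum fun j _ => le_abs_self _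
            _ ≤ ∑ j, |w j| * m := Finset.sum_le_sum fun j _ => hbound j
            _ = (∑ j, |w j|) * m := by rw [← Finset.sum_mul]
        have hw' : ∑ j, |w j| ≤ W := by rwa [pNorm_one_eq] at hw
        calc (1 / (m : ℝ)) * ∑ i, σ i * ∑ j, w j * x i j
            ≤ (1 / (m : ℝ)) * ((∑ j, |w j|) * m) := by
              exact mul_le_mul_of_nonneg_left this (by positivity)
          _ = ∑ j, |w j| := by field_simp
          _ ≤ W := hw'
      exact le_antisymm (csSup_le ⟨W, hmem⟩ hub) (le_csSup ⟨W, hub⟩ hmem)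
    unfold expRademacher
    rw [Finset.sum_congr rfl (fun s _ => key (signVec m s) (fun i => by
      unfold signVec; by_cases h : s i <;> simp [h]))]
    rw [Finset.sum_const, Finset.card_univ]
    simp [Fintype.card_fun]
  · -- the identity W = (W/m) √(log₂ d) ‖Xᵀ‖_{2,∞}
    have hcol : ∀ j : Fin (2 ^ m), pNorm 2 (fun i : Fin m => x i j)
        = Real.sqrt m := by
      intro j
      unfold pNorm
      have : ∀ i : Fin m, |x i j| ^ (2 : ℝ) = 1 := by
        intro i; rcases hsign j i with h | h <;> simp [h]
      rw [Finset.sum_congr rfl (fun i _ => this i)]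
      simp [Real.sqrt_eq_rpow]
    rw [show (⨆ j : Fin (2 ^ m), pNorm 2 (fun i : Fin m => x i j))
        = Real.sqrt m from by
      rw [iSup_congr hcol]; exact ciSup_const]
    rw [show Real.logb 2 ((2 : ℝ) ^ m) = m by
      rw [Real.logb_pow]; simp]
    rw [mul_assoc, Real.mul_self_sqrt (le_of_lt hm')]
    field_simp
end
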